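/- arXiv:1611.04907 — 2 statements merged into one kernel-verified Lean document; each statement's English description precedes it below -/
import Mathlib

section
/- Let q ≥ 1. The map B carries the frontier of the open unit cube (−1,1)^q in ℝ^q onto the frontier of the invertible region D_θ; that is, B(∂D_ζ) = ∂D_θ, where D_ζ = (−1,1)^q and ∂ denotes the topological frontier in ℝ^q. -/
/-- Forward recursion for the Barndorff-Nielsen–Schou / Monahan transformation:
`fwdRow ζ k i = θ_{i,k}` (1-based), with `θ_{k,k} = ζ_k` and
`θ_{i,k} = θ_{i,k-1} - ζ_k * θ_{k-i,k-1}` for `1 ≤ i ≤ k-1`. -/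
noncomputable def fwdRow (ζ : ℕ → ℝ) : ℕ → ℕ → ℝ
  | 0 => fun _ => 0
  | (k+1) => fun i =>
      if i = k + 1 then ζ (k + 1)
      else fwdRow ζ k i - ζ (k + 1) * fwdRow ζ k (k + 1 - i)

open Classical in
/-- Reverse recursion: `(invAux q θ d).1` is row `q - d` (i.e. `θ_{·, q-d}`), and
`(invAux q θ d).2` is the proposition that `|θ_{j,j}| < 1` for all `j` with `q - d ≤ j ≤ q`.
Row `q-(d+1)` is given by `θ_{i,k-1} = (θ_{i,k} + θ_{k,k} θ_{k-i,k})/(1-θ_{k,k}^2)` with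
`k = q - d` when the diagonal condition holds at all levels `≥ k`, and is `0` otherwise. -/
noncomputable def invAux (q : ℕ) (θ : ℕ → ℝ) : ℕ → (ℕ → ℝ) × Prop
  | 0 => (θ, |θ q| < 1)
  | (d+1) =>
      let p := invAux q θ d
      let row : ℕ → ℝ := fun i =>
        if p.2 then (p.1 i + p.1 (q - d) * p.1 (q - d - i)) / (1 - (p.1 (q - d)) ^ 2)
        else 0
      (row, p.2 ∧ |row (q - d - 1)| < 1)

/-- Interpret a vector in `ℝ^q` as a 1-based sequence `ℕ → ℝ` (value `0` out of range). -/
def toSeq {q : ℕ} (v : Fin q → ℝ) : ℕ → ℝ :=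
  fun n => if h : n - 1 < q then v ⟨n - 1, h⟩ else 0

/-- The map `B : ℝ^q → ℝ^q`, `B(ζ)_i = θ_{i,q}`. -/
noncomputable def Bmap {q : ℕ} (ζ : Fin q → ℝ) : Fin q → ℝ :=
  fun i => fwdRow (toSeq ζ) q (i.1 + 1)

/-- The map `B⁻ : ℝ^q → ℝ^q`, `B⁻(θ)_i = θ_{i,i}` computed by the reverse recursion. -/
noncomputable def Binv {q : ℕ} (θ : Fin q → ℝ) : Fin q → ℝ :=
  fun i => (invAux q (toSeq θ) (q - (i.1 + 1))).1 (i.1 + 1)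

/-- The invertible region `D_θ ⊆ ℝ^q`: all complex roots of
`θ(z) = 1 - θ_1 z - ⋯ - θ_q z^q` satisfy `|z| > 1`. -/
def invRegion (q : ℕ) : Set (Fin q → ℝ) :=
  {θ | ∀ z : ℂ, 1 - ∑ i : Fin q, (θ i : ℂ) * z ^ (i.1 + 1) = 0 → 1 < ‖z‖}

/-- The open unit cube `D_ζ = (-1,1)^q ⊆ ℝ^q`. -/
def openCube (q : ℕ) : Set (Fin q → ℝ) :=
  {ζ | ∀ i, ζ i ∈ Set.Ioo (-1 : ℝ) 1}

/-!
The recursion defining `B` is the Schur–Cohn (Levinson) step-up recursion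
`θ_k(z) = θ_{k-1}(z) - ζ_k z^k θ_{k-1}(1/z)` for the polynomials `θ_k(z) = 1 - ∑ θ_{i,k} z^i`.
On the unit circle the reflected polynomial `z^k θ_{k-1}(1/z)` has the same modulus as
`θ_{k-1}(z)`, so by the maximum principle it is dominated by `θ_{k-1}` on the closed disk when
`θ_{k-1}` has no zeros there. Hence `|ζ_k| < 1` keeps `θ_k` zero-free on the closed disk; conversely
a zero-free `θ_k` has `|ζ_k| = |θ_{k,k}| < 1` (Vieta: its roots lie outside the disk and their
product is `±1/θ_{k,k}`), and the step-down recursion inverts the step-up one. So `B⁻¹(D_θ) = D_ζ`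
and `B(D_ζ) = D_θ`. As `B` is continuous and `closure D_ζ` is compact, `B(closure D_ζ)` is the
closure of `D_θ`, and removing `D_ζ = B⁻¹(D_θ)` on the left and `D_θ` on the right gives the
frontiers.
-/

open Polynomial Complex

def ZeroFreeOnClosedDisk (p : ℝ[X]) : Prop := ∀ z : ℂ, ‖z‖ ≤ 1 → aeval z p ≠ 0

section ClosedDisk

variable {p : ℝ[X]} {N : ℕ}

theorem norm_aeval_reflect_of_norm_eq_one (hp : p.natDegree ≤ N) {z : ℂ} (hz : ‖z‖ = 1) :
    ‖aeval z (reflect N p)‖ = ‖aeval z p‖ := by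
  have hz0 : z ≠ 0 := norm_ne_zero_iff.mp (by rw [hz]; exact one_ne_zero)
  let _ : Invertible z⁻¹ := invertibleOfNonzero (inv_ne_zero hz0)
  have h := eval₂_reflect_mul_pow (algebraMap ℝ ℂ) z⁻¹ N p hp
  rw [invOf_eq_inv, inv_inv, ← aeval_def, ← aeval_def, inv_eq_conj hz, ← conjAe_coe,
    aeval_algHom_apply] at h
  simpa [hz] using congrArg norm h

theorem norm_aeval_reflect_le (hp : p.natDegree ≤ N) (hnv : ZeroFreeOnClosedDisk p) {z : ℂ}
    (hz : ‖z‖ ≤ 1) : ‖aeval z (reflect N p)‖ ≤ ‖aeval z p‖ := by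
  have hne : ∀ w ∈ closure (Metric.ball (0 : ℂ) 1), aeval w p ≠ 0 := fun w hw ↦
    hnv w (by simpa [closure_ball (0 : ℂ) one_ne_zero] using hw)
  have hratio : ‖aeval z (reflect N p) / aeval z p‖ ≤ 1 := by
    refine Complex.norm_le_of_forall_mem_frontier_norm_le
      (f := fun w ↦ aeval w (reflect N p) / aeval w p) (Metric.isBounded_ball (x := 0) (r := 1))
      (DifferentiableOn.diffContOnCl ?_) (fun w hw ↦ ?_) ?_
    · exact (Polynomial.differentiable_aeval _).differentiableOn.div
        (Polynomial.differentiable_aeval _).differentiableOn hne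
    · rw [frontier_ball (0 : ℂ) one_ne_zero, mem_sphere_zero_iff_norm] at hw
      rw [norm_div, norm_aeval_reflect_of_norm_eq_one hp hw]
      exact div_self_le_one _
    · simpa [closure_ball (0 : ℂ) one_ne_zero] using hz
  rwa [norm_div, div_le_one (norm_pos_iff.mpr (hnv z hz))] at hratio

theorem ZeroFreeOnClosedDisk.sub_C_mul_reflect (hnv : ZeroFreeOnClosedDisk p)
    (hp : p.natDegree ≤ N) {c : ℝ} (hc : |c| < 1) :
    ZeroFreeOnClosedDisk (p - C c * reflect N p) := by
  intro z hz h
  have hpos : 0 < ‖aeval z p‖ := norm_pos_iff.mpr (hnv z hz)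
  rw [map_sub, map_mul, aeval_C, sub_eq_zero] at h
  have := congrArg norm h
  rw [norm_mul, norm_algebraMap', Real.norm_eq_abs] at this
  nlinarith [norm_aeval_reflect_le hp hnv hz, abs_nonneg c]

theorem ZeroFreeOnClosedDisk.abs_coeff_lt_one (hnv : ZeroFreeOnClosedDisk p)
    (hp : p.natDegree ≤ N) (hN : N ≠ 0) (h0 : p.coeff 0 = 1) : |p.coeff N| < 1 := by
  rcases eq_or_ne (p.coeff N) 0 with hc | hc
  · simp [hc]
  have hdeg : p.natDegree = N := le_antisymm hp (le_natDegree_of_ne_zero hc)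
  set P := p.map (algebraMap ℝ ℂ)
  have hPdeg : P.natDegree = N := by rw [natDegree_map, hdeg]
  have hne : P.roots ≠ 0 := by
    rw [Ne, ← Multiset.card_eq_zero, IsAlgClosed.card_roots_eq_natDegree, hPdeg]
    exact hN
  have hroots : ∀ b ∈ P.roots, 1 < ‖b‖ := fun b hb ↦ by
    have : aeval b p = 0 := by rw [aeval_def, ← eval_map]; exact isRoot_of_mem_roots hb
    by_contra! hle
    exact hnv b hle this
  obtain ⟨a, ha⟩ := Multiset.exists_mem_of_ne_zero hne
  obtain ⟨t, ht⟩ := Multiset.exists_cons_of_mem ha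
  have hprod := (IsAlgClosed.splits P).eval_eq_prod_roots 0
  rw [eval_map, eval₂_at_zero, h0, map_one, leadingCoeff_map, ht, Multiset.map_cons,
    Multiset.prod_cons] at hprod
  have ht1 : 1 ≤ ‖(t.map (0 - ·)).prod‖ := by
    change 1 ≤ (normHom : ℂ →*₀ ℝ) _
    rw [map_multiset_prod, Multiset.map_map]
    refine Multiset.one_le_prod_map fun b hb ↦ ?_
    simpa using (hroots b (by rw [ht]; exact Multiset.mem_cons_of_mem hb)).le
  have hnorm := congrArg norm hprod
  rw [norm_one, norm_mul, norm_mul, zero_sub, norm_neg, norm_algebraMap', Real.norm_eq_abs,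
    leadingCoeff, hdeg] at hnorm
  have : 1 < ‖a‖ * ‖(t.map (0 - ·)).prod‖ := by nlinarith [hroots a ha]
  nlinarith [abs_nonneg (p.coeff N)]

theorem zeroFreeOnClosedDisk_C_mul_iff {a : ℝ} (ha : a ≠ 0) :
    ZeroFreeOnClosedDisk (C a * p) ↔ ZeroFreeOnClosedDisk p := by
  simp [ZeroFreeOnClosedDisk, ha]

end ClosedDisk

noncomputable def levinsonPoly (ζ : ℕ → ℝ) : ℕ → ℝ[X]
  | 0 => 1
  | k + 1 => levinsonPoly ζ k - C (ζ (k + 1)) * reflect (k + 1) (levinsonPoly ζ k)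

section Levinson

variable (ζ : ℕ → ℝ)

theorem fwdRow_eq_zero {k i : ℕ} (hi : i = 0 ∨ k < i) : fwdRow ζ k i = 0 := by
  induction k generalizing i with
  | zero => rfl
  | succ k ih =>
    simp only [fwdRow]
    rw [if_neg (by omega), ih (by omega), ih (by omega), mul_zero, sub_zero]

theorem coeff_levinsonPoly (k i : ℕ) :
    (levinsonPoly ζ k).coeff i = if i = 0 then 1 else -fwdRow ζ k i := by
  induction k generalizing i with
  | zero => by_cases hi : i = 0 <;> simp [levinsonPoly, fwdRow, coeff_one, hi]
  | succ k ih =>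
    simp only [levinsonPoly, coeff_sub, coeff_C_mul, coeff_reflect, ih, fwdRow]
    rcases Nat.lt_or_ge (k + 1) i with hi | hi
    · rw [revAt_eq_self_of_lt hi, if_neg (by omega), if_neg (by omega), if_neg (by omega),
        fwdRow_eq_zero ζ (Or.inr (by omega : k < i)), fwdRow_eq_zero ζ (Or.inl (by omega))]
      ring
    · rw [revAt_le hi]
      have hlast : fwdRow ζ k (k + 1) = 0 := fwdRow_eq_zero ζ (Or.inr k.lt_succ_self)
      obtain rfl | hi0 := eq_or_ne i 0
      · simp [hlast]
      obtain rfl | hik := eq_or_ne i (k + 1)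
      · simp [hlast]
      rw [if_neg hi0, if_neg (by omega), if_neg hi0, if_neg hik]
      ring

theorem natDegree_levinsonPoly_le (k : ℕ) : (levinsonPoly ζ k).natDegree ≤ k := by
  induction k with
  | zero => simp [levinsonPoly]
  | succ k ih =>
    refine (natDegree_sub_le _ _).trans (max_le (ih.trans k.le_succ) ?_)
    exact (natDegree_C_mul_le _ _).trans
      (natDegree_reflect_le.trans (max_le le_rfl (ih.trans k.le_succ)))

theorem levinsonPoly_congr {ζ' : ℕ → ℝ} {k : ℕ} (h : ∀ j, 1 ≤ j → j ≤ k → ζ j = ζ' j) :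
    levinsonPoly ζ k = levinsonPoly ζ' k := by
  induction k with
  | zero => rfl
  | succ k ih =>
    rw [levinsonPoly, levinsonPoly, ih fun j h1 h2 ↦ h j h1 (by omega),
      h (k + 1) (by omega) le_rfl]

theorem coeff_zero_levinsonPoly (k : ℕ) : (levinsonPoly ζ k).coeff 0 = 1 := by
  simp [coeff_levinsonPoly]

theorem coeff_levinsonPoly_succ_self (k : ℕ) :
    (levinsonPoly ζ (k + 1)).coeff (k + 1) = -ζ (k + 1) := by
  simp [coeff_levinsonPoly, fwdRow]

theorem levinsonPoly_succ_add_C_mul_reflect (k : ℕ) :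
    levinsonPoly ζ (k + 1) + C (ζ (k + 1)) * reflect (k + 1) (levinsonPoly ζ (k + 1)) =
      C (1 - ζ (k + 1) ^ 2) * levinsonPoly ζ k := by
  simp only [levinsonPoly, reflect_sub, reflect_C_mul, reflect_reflect, map_sub, map_one, map_pow]
  ring

theorem zeroFreeOnClosedDisk_levinsonPoly_iff (k : ℕ) :
    ZeroFreeOnClosedDisk (levinsonPoly ζ k) ↔ ∀ j, 1 ≤ j → j ≤ k → |ζ j| < 1 := by
  induction k with
  | zero =>
    simp only [ZeroFreeOnClosedDisk, levinsonPoly, map_one]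
    exact iff_of_true (fun _ _ ↦ one_ne_zero) (fun j h1 h2 ↦ by omega)
  | succ k ih =>
    suffices ZeroFreeOnClosedDisk (levinsonPoly ζ (k + 1)) ↔
        ZeroFreeOnClosedDisk (levinsonPoly ζ k) ∧ |ζ (k + 1)| < 1 by
      rw [this, ih]
      exact ⟨fun ⟨h, hk⟩ j h1 h2 ↦ (Nat.le_succ_iff.mp h2).elim (h j h1) (· ▸ hk),
        fun h ↦ ⟨fun j h1 h2 ↦ h j h1 (by omega), h (k + 1) (by omega) le_rfl⟩⟩
    constructor
    · intro hnv
      have hζ : |ζ (k + 1)| < 1 := by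
        simpa [coeff_levinsonPoly_succ_self] using hnv.abs_coeff_lt_one
          (natDegree_levinsonPoly_le ζ (k + 1)) k.succ_ne_zero (coeff_zero_levinsonPoly ζ _)
      have hne : 1 - ζ (k + 1) ^ 2 ≠ 0 := by
        nlinarith [sq_abs (ζ (k + 1)), abs_nonneg (ζ (k + 1))]
      refine ⟨(zeroFreeOnClosedDisk_C_mul_iff hne).mp ?_, hζ⟩
      rw [← levinsonPoly_succ_add_C_mul_reflect, ← sub_neg_eq_add, ← neg_mul, ← map_neg]
      exact hnv.sub_C_mul_reflect (natDegree_levinsonPoly_le ζ (k + 1)) (by rwa [abs_neg])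
    · rintro ⟨hnv, hζ⟩
      exact hnv.sub_C_mul_reflect ((natDegree_levinsonPoly_le ζ k).trans k.le_succ) hζ

end Levinson

theorem exists_levinsonPoly_eq {p : ℝ[X]} {k : ℕ} (hdeg : p.natDegree ≤ k) (h0 : p.coeff 0 = 1)
    (hnv : ZeroFreeOnClosedDisk p) : ∃ ζ, levinsonPoly ζ k = p := by
  induction k generalizing p with
  | zero => exact ⟨0, by rw [eq_C_of_natDegree_le_zero hdeg, h0, map_one]; rfl⟩
  | succ k ih =>
    set c := p.coeff (k + 1)
    have hc : |c| < 1 := hnv.abs_coeff_lt_one hdeg k.succ_ne_zero h0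
    have hne : 1 - c ^ 2 ≠ 0 := by nlinarith [sq_abs c, abs_nonneg c]
    set r := p - C c * reflect (k + 1) p
    have hr : ∀ i, r.coeff i = p.coeff i - c * p.coeff (revAt (k + 1) i) := fun i ↦ by
      simp [r]
    have hr_deg : r.natDegree ≤ k := by
      refine natDegree_le_iff_coeff_eq_zero.mpr fun i hi ↦ ?_
      obtain rfl | hi' := eq_or_ne i (k + 1)
      · simp [hr, h0, c]
      rw [hr, revAt_eq_self_of_lt (by omega), coeff_eq_zero_of_natDegree_lt (by omega), mul_zero,
        sub_zero]
    have hr0 : r.coeff 0 = 1 - c ^ 2 := by simp [hr, h0, c, sq]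
    obtain ⟨ζ, hζ⟩ := ih (p := C (1 - c ^ 2)⁻¹ * r) ((natDegree_C_mul_le _ _).trans hr_deg)
      (by rw [coeff_C_mul, hr0, inv_mul_cancel₀ hne])
      ((zeroFreeOnClosedDisk_C_mul_iff (inv_ne_zero hne)).mpr (hnv.sub_C_mul_reflect hdeg hc))
    refine ⟨Function.update ζ (k + 1) (-c), ?_⟩
    rw [levinsonPoly, Function.update_self,
      levinsonPoly_congr _ fun j _ hj ↦ Function.update_of_ne (by omega) _ ζ, hζ]
    have hinv : C (1 - c ^ 2)⁻¹ * (1 - C c ^ 2) = (1 : ℝ[X]) := by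
      rw [← map_pow, ← map_one C, ← map_sub, ← C_mul, inv_mul_cancel₀ hne]
    simp only [r, reflect_C_mul, reflect_sub, reflect_reflect, map_neg]
    linear_combination p * hinv

noncomputable def maPoly {q : ℕ} (θ : Fin q → ℝ) : ℝ[X] :=
  1 - ∑ i : Fin q, C (θ i) * X ^ (i.1 + 1)

section MAPoly

variable {q : ℕ}

theorem invRegion_eq_setOf_forall_closedBall (q : ℕ) : invRegion q =
    {θ | ∀ z ∈ Metric.closedBall (0 : ℂ) 1, 1 - ∑ i : Fin q, (θ i : ℂ) * z ^ (i.1 + 1) ≠ 0} := by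
  ext θ
  simp only [invRegion, Set.mem_ofPred_eq, mem_closedBall_zero_iff]
  exact forall_congr' fun z ↦ ⟨fun h hz h0 ↦ (h h0).not_ge hz, fun h h0 ↦ not_le.mp (h · h0)⟩

theorem mem_invRegion_iff (θ : Fin q → ℝ) :
    θ ∈ invRegion q ↔ ZeroFreeOnClosedDisk (maPoly θ) := by
  simp [invRegion_eq_setOf_forall_closedBall, ZeroFreeOnClosedDisk, maPoly]

theorem coeff_maPoly_succ (θ : Fin q → ℝ) (i : Fin q) : (maPoly θ).coeff (i.1 + 1) = -θ i := by
  simp [maPoly, coeff_X_pow, coeff_one, Fin.val_inj]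

theorem coeff_maPoly_zero (θ : Fin q → ℝ) : (maPoly θ).coeff 0 = 1 := by
  simp [maPoly, coeff_X_pow]

theorem natDegree_maPoly_le (θ : Fin q → ℝ) : (maPoly θ).natDegree ≤ q := by
  refine (natDegree_sub_le _ _).trans (max_le (natDegree_one.trans_le q.zero_le) ?_)
  exact natDegree_sum_le_of_forall_le _ _ fun i _ ↦ (natDegree_C_mul_X_pow_le _ _).trans i.2

theorem maPoly_injective : Function.Injective (maPoly (q := q)) := fun θ θ' h ↦
  funext fun i ↦ neg_injective <| by rw [← coeff_maPoly_succ, ← coeff_maPoly_succ, h]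

theorem toSeq_succ (v : Fin q → ℝ) (i : Fin q) : toSeq v (i.1 + 1) = v i := by
  simp [toSeq]

theorem levinsonPoly_toSeq (ζ : Fin q → ℝ) : levinsonPoly (toSeq ζ) q = maPoly (Bmap ζ) := by
  ext n
  rcases n with _ | n
  · rw [coeff_zero_levinsonPoly, coeff_maPoly_zero]
  by_cases hn : n < q
  · rw [coeff_levinsonPoly, if_neg n.succ_ne_zero, coeff_maPoly_succ _ ⟨n, hn⟩]
    rfl
  · rw [coeff_eq_zero_of_natDegree_lt ((natDegree_levinsonPoly_le _ q).trans_lt (by omega)),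
      coeff_eq_zero_of_natDegree_lt ((natDegree_maPoly_le _).trans_lt (by omega))]

theorem preimage_Bmap_invRegion : Bmap ⁻¹' invRegion q = openCube q := by
  ext ζ
  rw [Set.mem_preimage, mem_invRegion_iff, ← levinsonPoly_toSeq,
    zeroFreeOnClosedDisk_levinsonPoly_iff]
  refine ⟨fun h i ↦ ?_, fun h j hj1 hjq ↦ ?_⟩
  · simpa [toSeq_succ, abs_lt] using h (i.1 + 1) (by omega) i.2
  · obtain ⟨i, rfl⟩ : ∃ i : Fin q, i.1 + 1 = j := ⟨⟨j - 1, by omega⟩, by simp; omega⟩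
    simpa [toSeq_succ, abs_lt] using h i

theorem invRegion_subset_range_Bmap : invRegion q ⊆ Set.range Bmap := by
  intro θ hθ
  obtain ⟨s, hs⟩ := exists_levinsonPoly_eq (natDegree_maPoly_le θ) (coeff_maPoly_zero θ)
    ((mem_invRegion_iff θ).mp hθ)
  refine ⟨fun i ↦ s (i.1 + 1), maPoly_injective ?_⟩
  rw [← levinsonPoly_toSeq, ← hs]
  refine levinsonPoly_congr _ fun j hj1 hjq ↦ ?_
  simp [toSeq, show j - 1 < q by omega, show j - 1 + 1 = j by omega]

end MAPoly

theorem image_frontier_preimage_eq {X Y : Type*} [TopologicalSpace X] [TopologicalSpace Y]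
    [T2Space Y] {f : X → Y} (hf : Continuous f) {V : Set Y} (hV : IsOpen V)
    (hK : IsCompact (closure (f ⁻¹' V))) (hVf : V ⊆ Set.range f) :
    f '' frontier (f ⁻¹' V) = frontier V := by
  -- `f` maps the compact closure onto a closed set squeezed between `V` and `closure V`
  have hclosure : closure V = f '' closure (f ⁻¹' V) := by
    refine (closure_minimal ?_ (hK.image hf).isClosed).antisymm ?_
    · exact (Set.image_preimage_eq_of_subset hVf).symm.subset.trans
        (Set.image_mono subset_closure)
    · exact (image_closure_subset_closure_image hf).trans
        (closure_mono (Set.image_preimage_subset f V))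
  rw [(hV.preimage hf).frontier_eq, hV.frontier_eq, hclosure, Set.image_sdiff_preimage]

theorem continuous_fwdRow_toSeq (q k i : ℕ) :
    Continuous fun v : Fin q → ℝ ↦ fwdRow (toSeq v) k i := by
  have hseq : ∀ n, Continuous fun v : Fin q → ℝ ↦ toSeq v n := fun n ↦ by
    unfold toSeq
    split_ifs <;> fun_prop
  induction k generalizing i with
  | zero => exact continuous_const
  | succ k ih =>
    simp only [fwdRow]
    split_ifs
    · exact hseq _
    · exact (ih i).sub ((hseq _).mul (ih _))

theorem continuous_Bmap (q : ℕ) : Continuous (Bmap (q := q)) :=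
  continuous_pi fun i ↦ continuous_fwdRow_toSeq q q (i.1 + 1)

theorem isOpen_invRegion (q : ℕ) : IsOpen (invRegion q) := by
  have hcont : Continuous fun x : (Fin q → ℝ) × ℂ ↦
      1 - ∑ i : Fin q, (x.1 i : ℂ) * x.2 ^ (i.1 + 1) := by fun_prop
  rw [invRegion_eq_setOf_forall_closedBall, isOpen_iff_eventually]
  exact fun θ hθ ↦ (isCompact_closedBall 0 1).eventually_forall_of_forall_eventually
    fun z hz ↦ (isOpen_ne_fun hcont continuous_const).eventually_mem (hθ z hz)

theorem isCompact_closure_openCube (q : ℕ) : IsCompact (closure (openCube q)) := by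
  have hcube : openCube q ⊆ Set.univ.pi fun _ ↦ Set.Icc (-1 : ℝ) 1 :=
    fun ζ hζ i _ ↦ Set.Ioo_subset_Icc_self (hζ i)
  exact (isCompact_univ_pi fun _ ↦ isCompact_Icc).of_isClosed_subset isClosed_closure
    (closure_minimal hcube (isClosed_set_pi fun _ _ ↦ isClosed_Icc))

theorem boundary_image_eq_general {q : ℕ} :
    Bmap '' frontier (openCube q) = frontier (invRegion q) := by
  rw [← preimage_Bmap_invRegion]
  exact image_frontier_preimage_eq (continuous_Bmap q) (isOpen_invRegion q)
    (preimage_Bmap_invRegion ▸ isCompact_closure_openCube q) invRegion_subset_range_Bmap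

/-- For `q ≥ 1`, `B` carries the frontier of the open unit cube `(-1,1)^q` onto the
frontier of the invertible region: `B(∂D_ζ) = ∂D_θ`. -/
theorem boundary_image_eq {q : ℕ} (hq : 1 ≤ q) :
    Bmap '' frontier (openCube q) = frontier (invRegion q) :=
  boundary_image_eq_general
end

section
/- Let X and Y be metric spaces, let D ⊆ X be an open set whose closure is compact, and let f : X → Y be continuous on the closure of D. Suppose f restricted to D is injective, its image E = f(D) is open in Y, and the inverse map E → D is continuous. Then f(closure D) = closure E and f(∂D) = ∂E, where ∂ denotes the topological frontier. -/
/-!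
The image of the compact set `closure D` is closed, which gives the closure statement. For the
frontier, if a point `x ∈ closure D \ D` had `f x ∈ E`, then the inverse `g`, continuous at `f x`,
would give `x = lim g (f xₙ) = g (f x) ∈ D` for any sequence `xₙ → x` in `D`.
-/

open Set Filter Topology

theorem Set.LeftInvOn.apply_eq_of_mem_closure {X Y : Type*} [TopologicalSpace X] [T2Space X]
    [TopologicalSpace Y] {s : Set X} {f : X → Y} {g : Y → X} (hgf : LeftInvOn g f s) {x : X}
    (hx : x ∈ closure s) (hf : ContinuousWithinAt f s x) (hg : ContinuousAt g (f x)) :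
    g (f x) = x := by
  have : (𝓝[s] x).NeBot := mem_closure_iff_nhdsWithin_neBot.mp hx
  have hcomp : Tendsto (g ∘ f) (𝓝[s] x) (𝓝 (g (f x))) := hg.tendsto.comp hf
  have hid : Tendsto (g ∘ f) (𝓝[s] x) (𝓝 x) :=
    tendsto_nhdsWithin_of_tendsto_nhds tendsto_id |>.congr'
      (eventually_nhdsWithin_of_forall fun y hy => (hgf hy).symm)
  exact tendsto_nhds_unique hcomp hid

theorem Set.LeftInvOn.closure_inter_preimage_image {X Y : Type*} [TopologicalSpace X]
    [T2Space X] [TopologicalSpace Y] {s : Set X} {f : X → Y} {g : Y → X} (hgf : LeftInvOn g f s)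
    (hf : ContinuousOn f (closure s)) (hg : ContinuousOn g (f '' s)) (hopen : IsOpen (f '' s)) :
    closure s ∩ f ⁻¹' (f '' s) = s := by
  refine Subset.antisymm ?_ fun x hx => ⟨subset_closure hx, mem_image_of_mem f hx⟩
  rintro x ⟨hx, y, hy, hfy⟩
  have hgx : g (f x) = x :=
    hgf.apply_eq_of_mem_closure hx ((hf x hx).mono subset_closure)
      (hg.continuousAt (hfy ▸ hopen.mem_nhds (mem_image_of_mem f hy)))
  rwa [← hgx, ← hfy, hgf hy]

theorem image_closure_and_frontier_general {X Y : Type*} [MetricSpace X] [MetricSpace Y]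
    (D : Set X) (hD : IsOpen D) (hcomp : IsCompact (closure D))
    (f : X → Y) (hf : ContinuousOn f (closure D))
    (E : Set Y) (hE : E = f '' D) (hEopen : IsOpen E)
    (g : Y → X) (hg : ContinuousOn g E) (hgf : ∀ x ∈ D, g (f x) = x) :
    f '' closure D = closure E ∧ f '' frontier D = frontier E := by
  subst hE
  have hclosure : f '' closure D = closure (f '' D) := image_closure_of_isCompact hcomp hf
  refine ⟨hclosure, ?_⟩
  have hboundary : closure D \ f ⁻¹' (f '' D) = closure D \ D := by
    rw [← sdiff_self_inter, LeftInvOn.closure_inter_preimage_image hgf hf hg hEopen]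
  rw [hD.frontier_eq, hEopen.frontier_eq, ← hboundary, image_sdiff_preimage, hclosure]

/-- Abstract topological content of the paper's Theorem 1: if `X`, `Y` are metric spaces,
`D ⊆ X` is open with compact closure, `f` is continuous on `closure D`, `f` restricted to
`D` is injective with open image `E = f '' D`, and the inverse map `E → D` (given by a
function `g` continuous on `E` with `g (f x) = x` on `D`) is continuous, then
`f (closure D) = closure E` and `f (∂D) = ∂E`. -/
theorem image_closure_and_frontier {X Y : Type*} [MetricSpace X] [MetricSpace Y]
    (D : Set X) (hD : IsOpen D) (hcomp : IsCompact (closure D))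
    (f : X → Y) (hf : ContinuousOn f (closure D)) (hinj : Set.InjOn f D)
    (E : Set Y) (hE : E = f '' D) (hEopen : IsOpen E)
    (g : Y → X) (hg : ContinuousOn g E) (hgf : ∀ x ∈ D, g (f x) = x) :
    f '' closure D = closure E ∧ f '' frontier D = frontier E :=
  image_closure_and_frontier_general D hD hcomp f hf E hE hEopen g hg hgf
end
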